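/- arXiv:2101.12606 — 7 statements merged into one kernel-verified Lean document; each statement's English description precedes it below -/
import Mathlib

section
/- Assume the discrete-time optimal control problem is strictly dissipative in one-step form with storage function λ satisfying λ(x) ≥ −D for all x ∈ X (D > 0) and α ∈ K∞. Assume moreover there exist γ ∈ K∞ and C > 0 such that V_T(x) ≤ V_T(x^e) + γ(‖x−x^e‖) + C for all x ∈ X and all horizons T. Then every optimal trajectory, i.e., every trajectory generated by an admissible control u for x0 ∈ X on horizon T with J_T(x0,u) = V_T(x0), satisfies Σ_{t=0}^{T−1} α(‖x(t)−x^e‖) ≤ γ(‖x0−x^e‖) + C + λ(x0) + D. -/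
/-- Trajectory of the discrete-time control system `x(t+1) = f(x(t), u(t))`, `x(0) = x0`. -/
def traj {n m : ℕ}
    (f : EuclideanSpace ℝ (Fin n) → EuclideanSpace ℝ (Fin m) → EuclideanSpace ℝ (Fin n))
    (x0 : EuclideanSpace ℝ (Fin n)) (u : ℕ → EuclideanSpace ℝ (Fin m)) :
    ℕ → EuclideanSpace ℝ (Fin n)
  | 0 => x0
  | t + 1 => f (traj f x0 u t) (u t)

/-- A control `u` is admissible for `x0` on horizon `T` if `u(t) ∈ U` for `t < T` and the
trajectory satisfies `x(t) ∈ X` for `t ≤ T`. -/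
def Admissible {n m : ℕ}
    (f : EuclideanSpace ℝ (Fin n) → EuclideanSpace ℝ (Fin m) → EuclideanSpace ℝ (Fin n))
    (X : Set (EuclideanSpace ℝ (Fin n))) (U : Set (EuclideanSpace ℝ (Fin m)))
    (x0 : EuclideanSpace ℝ (Fin n)) (u : ℕ → EuclideanSpace ℝ (Fin m)) (T : ℕ) : Prop :=
  (∀ t < T, u t ∈ U) ∧ (∀ t ≤ T, traj f x0 u t ∈ X)

/-- `α : [0,∞) → [0,∞)` is of class `K∞`: continuous, strictly increasing, unbounded
and `α(0) = 0`. -/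
def KInf (α : ℝ → ℝ) : Prop :=
  ContinuousOn α (Set.Ici 0) ∧ StrictMonoOn α (Set.Ici 0) ∧ α 0 = 0 ∧
    (∀ r ∈ Set.Ici (0:ℝ), 0 ≤ α r) ∧ (∀ M : ℝ, ∃ r ∈ Set.Ici (0:ℝ), M < α r)

/-! The one-step dissipation inequality telescopes along an admissible trajectory to
`λ(x(T)) + Σ α(‖x(t) − xᵉ‖) ≤ λ(x0) + J_T(x0,u) − T ℓ(xᵉ,uᵉ)`. For an optimal trajectory
`J_T(x0,u) = V_T(x0) ≤ V_T(xᵉ) + γ(‖x0 − xᵉ‖) + C`, and the constant control `uᵉ` gives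
`V_T(xᵉ) ≤ T ℓ(xᵉ,uᵉ)`; with `λ(x(T)) ≥ −D` the bound follows. The same telescoped inequality
bounds all costs from `xᵉ` below, so the infimum defining `V_T(xᵉ)` is not a junk value. -/

open Finset

section ControlSystem

variable {n m : ℕ}
  {f : EuclideanSpace ℝ (Fin n) → EuclideanSpace ℝ (Fin m) → EuclideanSpace ℝ (Fin n)}
  {X : Set (EuclideanSpace ℝ (Fin n))} {U : Set (EuclideanSpace ℝ (Fin m))}

def cost (f : EuclideanSpace ℝ (Fin n) → EuclideanSpace ℝ (Fin m) → EuclideanSpace ℝ (Fin n))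
    (ℓ : EuclideanSpace ℝ (Fin n) → EuclideanSpace ℝ (Fin m) → ℝ) (T : ℕ)
    (x0 : EuclideanSpace ℝ (Fin n)) (u : ℕ → EuclideanSpace ℝ (Fin m)) : ℝ :=
  ∑ t ∈ range T, ℓ (traj f x0 u t) (u t)

noncomputable def optimalValue
    (f : EuclideanSpace ℝ (Fin n) → EuclideanSpace ℝ (Fin m) → EuclideanSpace ℝ (Fin n))
    (X : Set (EuclideanSpace ℝ (Fin n))) (U : Set (EuclideanSpace ℝ (Fin m)))
    (ℓ : EuclideanSpace ℝ (Fin n) → EuclideanSpace ℝ (Fin m) → ℝ) (T : ℕ)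
    (x0 : EuclideanSpace ℝ (Fin n)) : ℝ :=
  sInf {c : ℝ | ∃ u, Admissible f X U x0 u T ∧ c = cost f ℓ T x0 u}

theorem Admissible.of_succ {x0 : EuclideanSpace ℝ (Fin n)} {u : ℕ → EuclideanSpace ℝ (Fin m)}
    {T : ℕ} (h : Admissible f X U x0 u (T + 1)) : Admissible f X U x0 u T :=
  ⟨fun t ht => h.1 t (ht.trans T.lt_succ_self), fun t ht => h.2 t (ht.trans T.le_succ)⟩

theorem traj_const_of_fixedPoint {xe : EuclideanSpace ℝ (Fin n)} {ue : EuclideanSpace ℝ (Fin m)}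
    (heq : f xe ue = xe) (t : ℕ) : traj f xe (fun _ => ue) t = xe := by
  induction t with
  | zero => rfl
  | succ t ih => simp only [traj, ih, heq]

theorem admissible_const_of_fixedPoint {xe : EuclideanSpace ℝ (Fin n)}
    {ue : EuclideanSpace ℝ (Fin m)} (hxe : xe ∈ X) (hue : ue ∈ U) (heq : f xe ue = xe) (T : ℕ) :
    Admissible f X U xe (fun _ => ue) T :=
  ⟨fun _ _ => hue, fun t _ => by rw [traj_const_of_fixedPoint heq t]; exact hxe⟩

theorem cost_const_of_fixedPoint {xe : EuclideanSpace ℝ (Fin n)} {ue : EuclideanSpace ℝ (Fin m)}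
    (ℓ : EuclideanSpace ℝ (Fin n) → EuclideanSpace ℝ (Fin m) → ℝ) (heq : f xe ue = xe) (T : ℕ) :
    cost f ℓ T xe (fun _ => ue) = T * ℓ xe ue := by
  simp [cost, traj_const_of_fixedPoint heq]

theorem optimalValue_le_cost {ℓ : EuclideanSpace ℝ (Fin n) → EuclideanSpace ℝ (Fin m) → ℝ}
    {T : ℕ} {x0 : EuclideanSpace ℝ (Fin n)} {u : ℕ → EuclideanSpace ℝ (Fin m)}
    (hbdd : BddBelow {c : ℝ | ∃ u, Admissible f X U x0 u T ∧ c = cost f ℓ T x0 u})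
    (hadm : Admissible f X U x0 u T) : optimalValue f X U ℓ T x0 ≤ cost f ℓ T x0 u :=
  csInf_le hbdd ⟨u, hadm, rfl⟩

section Dissipative

def DissipativeWith
    (f : EuclideanSpace ℝ (Fin n) → EuclideanSpace ℝ (Fin m) → EuclideanSpace ℝ (Fin n))
    (X : Set (EuclideanSpace ℝ (Fin n))) (U : Set (EuclideanSpace ℝ (Fin m)))
    (ℓ : EuclideanSpace ℝ (Fin n) → EuclideanSpace ℝ (Fin m) → ℝ) (ℓe : ℝ)
    (lam ρ : EuclideanSpace ℝ (Fin n) → ℝ) : Prop :=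
  ∀ x ∈ X, ∀ u ∈ U, f x u ∈ X → lam (f x u) ≤ lam x + ℓ x u - ℓe - ρ x

variable {ℓ : EuclideanSpace ℝ (Fin n) → EuclideanSpace ℝ (Fin m) → ℝ}
  {lam ρ : EuclideanSpace ℝ (Fin n) → ℝ} {ℓe D : ℝ}

theorem storage_add_sum_le_of_dissipative
    (hdiss : DissipativeWith f X U ℓ ℓe lam ρ) {x0 : EuclideanSpace ℝ (Fin n)}
    {u : ℕ → EuclideanSpace ℝ (Fin m)} {T : ℕ} (hadm : Admissible f X U x0 u T) :
    lam (traj f x0 u T) + ∑ t ∈ range T, ρ (traj f x0 u t) ≤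
      lam x0 + cost f ℓ T x0 u - T * ℓe := by
  induction T with
  | zero => simp [traj, cost]
  | succ T ih =>
    have hstep := hdiss _ (hadm.2 T T.le_succ) _ (hadm.1 T T.lt_succ_self) (hadm.2 (T + 1) le_rfl)
    have := ih hadm.of_succ
    simp only [cost, sum_range_succ, traj, Nat.cast_succ] at this hstep ⊢
    linarith

theorem sum_le_of_dissipative
    (hdiss : DissipativeWith f X U ℓ ℓe lam ρ)
    (hlam : ∀ x ∈ X, -D ≤ lam x) {x0 : EuclideanSpace ℝ (Fin n)}
    {u : ℕ → EuclideanSpace ℝ (Fin m)} {T : ℕ} (hadm : Admissible f X U x0 u T) :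
    ∑ t ∈ range T, ρ (traj f x0 u t) ≤ lam x0 + D + cost f ℓ T x0 u - T * ℓe := by
  linarith [storage_add_sum_le_of_dissipative hdiss hadm, hlam _ (hadm.2 T le_rfl)]

theorem bddBelow_cost_of_dissipative
    (hdiss : DissipativeWith f X U ℓ ℓe lam ρ)
    (hlam : ∀ x ∈ X, -D ≤ lam x) (hρ : ∀ x, 0 ≤ ρ x) (x0 : EuclideanSpace ℝ (Fin n))
    (T : ℕ) : BddBelow {c : ℝ | ∃ u, Admissible f X U x0 u T ∧ c = cost f ℓ T x0 u} := by
  refine ⟨T * ℓe - D - lam x0, ?_⟩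
  rintro _ ⟨u, hadm, rfl⟩
  have := sum_le_of_dissipative hdiss hlam hadm
  linarith [sum_nonneg fun t (_ : t ∈ range T) => hρ (traj f x0 u t)]

theorem optimalValue_equilibrium_le
    (hdiss : DissipativeWith f X U ℓ ℓe lam ρ)
    (hlam : ∀ x ∈ X, -D ≤ lam x) (hρ : ∀ x, 0 ≤ ρ x) {xe : EuclideanSpace ℝ (Fin n)}
    {ue : EuclideanSpace ℝ (Fin m)} (hxe : xe ∈ X) (hue : ue ∈ U) (heq : f xe ue = xe) (T : ℕ) :
    optimalValue f X U ℓ T xe ≤ T * ℓ xe ue :=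
  cost_const_of_fixedPoint ℓ heq T ▸
    optimalValue_le_cost (bddBelow_cost_of_dissipative hdiss hlam hρ xe T)
      (admissible_const_of_fixedPoint hxe hue heq T)

end Dissipative

end ControlSystem

theorem optimal_trajectory_sum_bound_general {n m : ℕ}
    (f : EuclideanSpace ℝ (Fin n) → EuclideanSpace ℝ (Fin m) → EuclideanSpace ℝ (Fin n))
    (X : Set (EuclideanSpace ℝ (Fin n))) (U : Set (EuclideanSpace ℝ (Fin m)))
    (ℓ : EuclideanSpace ℝ (Fin n) → EuclideanSpace ℝ (Fin m) → ℝ)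
    (J : ℕ → EuclideanSpace ℝ (Fin n) → (ℕ → EuclideanSpace ℝ (Fin m)) → ℝ)
    (hJ : ∀ T x0 u, J T x0 u = ∑ t ∈ Finset.range T, ℓ (traj f x0 u t) (u t))
    (V : ℕ → EuclideanSpace ℝ (Fin n) → ℝ)
    (hV : ∀ T x0, V T x0 = sInf {c : ℝ | ∃ u, Admissible f X U x0 u T ∧ c = J T x0 u})
    (xe : EuclideanSpace ℝ (Fin n)) (ue : EuclideanSpace ℝ (Fin m))
    (hxe : xe ∈ X) (hue : ue ∈ U) (heq : f xe ue = xe)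
    (lam : EuclideanSpace ℝ (Fin n) → ℝ) (α : ℝ → ℝ) (hα : KInf α)
    (hdiss : ∀ x ∈ X, ∀ u ∈ U, f x u ∈ X →
      lam (f x u) ≤ lam x + ℓ x u - ℓ xe ue - α ‖x - xe‖)
    (D : ℝ) (hlam : ∀ x ∈ X, -D ≤ lam x)
    (γ : ℝ → ℝ) (C : ℝ)
    (hVbound : ∀ x ∈ X, ∀ T : ℕ, V T x ≤ V T xe + γ ‖x - xe‖ + C) :
    ∀ T : ℕ, ∀ x0 ∈ X, ∀ u : ℕ → EuclideanSpace ℝ (Fin m),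
      Admissible f X U x0 u T → J T x0 u = V T x0 →
      ∑ t ∈ Finset.range T, α ‖traj f x0 u t - xe‖ ≤ γ ‖x0 - xe‖ + C + lam x0 + D := by
  obtain rfl : J = cost f ℓ := funext fun T => funext fun x0 => funext (hJ T x0)
  obtain rfl : V = optimalValue f X U ℓ := funext fun T => funext (hV T)
  have hρ (x : EuclideanSpace ℝ (Fin n)) : 0 ≤ α ‖x - xe‖ := hα.2.2.2.1 _ (norm_nonneg _)
  intro T x0 hx0 u hadm hopt
  have hsum := sum_le_of_dissipative (ρ := fun x => α ‖x - xe‖) hdiss hlam hadm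
  have hVe := optimalValue_equilibrium_le hdiss hlam hρ hxe hue heq T
  linarith [hVbound x0 hx0 T]

/-- Under strict dissipativity with bounded-below storage and the bound
`V_T(x) ≤ V_T(xᵉ) + γ(‖x−xᵉ‖) + C`, every optimal trajectory satisfies
`Σ_{t<T} α(‖x(t)−xᵉ‖) ≤ γ(‖x0−xᵉ‖) + C + λ(x0) + D`. -/
theorem optimal_trajectory_sum_bound {n m : ℕ}
    (f : EuclideanSpace ℝ (Fin n) → EuclideanSpace ℝ (Fin m) → EuclideanSpace ℝ (Fin n))
    (X : Set (EuclideanSpace ℝ (Fin n))) (U : Set (EuclideanSpace ℝ (Fin m)))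
    (ℓ : EuclideanSpace ℝ (Fin n) → EuclideanSpace ℝ (Fin m) → ℝ)
    (J : ℕ → EuclideanSpace ℝ (Fin n) → (ℕ → EuclideanSpace ℝ (Fin m)) → ℝ)
    (hJ : ∀ T x0 u, J T x0 u = ∑ t ∈ Finset.range T, ℓ (traj f x0 u t) (u t))
    (V : ℕ → EuclideanSpace ℝ (Fin n) → ℝ)
    (hV : ∀ T x0, V T x0 = sInf {c : ℝ | ∃ u, Admissible f X U x0 u T ∧ c = J T x0 u})
    (xe : EuclideanSpace ℝ (Fin n)) (ue : EuclideanSpace ℝ (Fin m))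
    (hxe : xe ∈ X) (hue : ue ∈ U) (heq : f xe ue = xe)
    (lam : EuclideanSpace ℝ (Fin n) → ℝ) (α : ℝ → ℝ) (hα : KInf α)
    (hdiss : ∀ x ∈ X, ∀ u ∈ U, f x u ∈ X →
      lam (f x u) ≤ lam x + ℓ x u - ℓ xe ue - α ‖x - xe‖)
    (D : ℝ) (hD : 0 < D) (hlam : ∀ x ∈ X, -D ≤ lam x)
    (γ : ℝ → ℝ) (hγ : KInf γ) (C : ℝ) (hC : 0 < C)
    (hVbound : ∀ x ∈ X, ∀ T : ℕ, V T x ≤ V T xe + γ ‖x - xe‖ + C) :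
    ∀ T : ℕ, ∀ x0 ∈ X, ∀ u : ℕ → EuclideanSpace ℝ (Fin m),
      Admissible f X U x0 u T → J T x0 u = V T x0 →
      ∑ t ∈ Finset.range T, α ‖traj f x0 u t - xe‖ ≤ γ ‖x0 - xe‖ + C + lam x0 + D :=
  optimal_trajectory_sum_bound_general f X U ℓ J hJ V hV xe ue hxe hue heq lam α hα hdiss D hlam γ C
    hVbound
end

section
/- (Strict dissipativity implies the turnpike property.) Assume the discrete-time optimal control problem is strictly dissipative in one-step form with storage function λ and α ∈ K∞, that λ(x) ≥ −D for all x ∈ X (D > 0), and that there exist γ ∈ K∞ and C > 0 such that |V_T(x) − V_T(x^e)| ≤ γ(‖x−x^e‖) + C and |λ(x)| ≤ γ(‖x−x^e‖) + C for all x ∈ X and all horizons T. Then for every ε > 0 and K > 0, every horizon T ∈ ℕ, every x0 ∈ X with ‖x0−x^e‖ ≤ K, and every optimal control u for x0 on horizon T (admissible with J_T(x0,u) = V_T(x0)), the number of times t ∈ {0,…,T−1} with ‖x(t)−x^e‖ > ε is at most (2γ(K) + 2C + D)/α(ε); in particular this bound is independent of T and of x0. -/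
/-!
Summing the one-step dissipation inequality along an optimal trajectory gives
`∑ α(‖x(t) − xᵉ‖) ≤ λ(x₀) − λ(x(T)) + V_T(x₀) − T ℓ(xᵉ, uᵉ)`. Staying at the equilibrium shows
`V_T(xᵉ) ≤ T ℓ(xᵉ, uᵉ)`, so the right-hand side is at most
`λ(x₀) + D + V_T(x₀) − V_T(xᵉ) ≤ 2γ(K) + 2C + D`. Every time with `‖x(t) − xᵉ‖ > ε`
contributes at least `α(ε)` to the left-hand side.
-/

open Finset

namespace KInf

variable {α : ℝ → ℝ}

theorem monotoneOn (hα : KInf α) : MonotoneOn α (Set.Ici 0) :=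
  hα.2.1.monotoneOn

theorem nonneg (hα : KInf α) {r : ℝ} (hr : 0 ≤ r) : 0 ≤ α r :=
  hα.2.2.2.1 r hr

theorem pos (hα : KInf α) {r : ℝ} (hr : 0 < r) : 0 < α r := by
  simpa [hα.2.2.1] using hα.2.1 Set.self_mem_Ici (Set.mem_Ici.mpr hr.le) hr

/-- Markov's inequality for a `K∞` function of nonnegative quantities. -/
theorem card_filter_lt_mul_le_sum (hα : KInf α) {ι : Type*} (s : Finset ι) {d : ι → ℝ}
    (hd : ∀ i, 0 ≤ d i) {ε : ℝ} (hε : 0 ≤ ε) :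
    #{i ∈ s | ε < d i} * α ε ≤ ∑ i ∈ s, α (d i) :=
  calc #{i ∈ s | ε < d i} * α ε
      ≤ ∑ i ∈ s with ε < d i, α (d i) := by
        rw [← nsmul_eq_mul]
        exact card_nsmul_le_sum _ _ _ fun i hi ↦
          hα.monotoneOn hε (hd i) (mem_filter.mp hi).2.le
    _ ≤ ∑ i ∈ s, α (d i) :=
        sum_le_sum_of_subset_of_nonneg (filter_subset _ _) fun i _ _ ↦ hα.nonneg (hd i)

end KInf

section ControlSystem

variable {n m : ℕ}
  {f : EuclideanSpace ℝ (Fin n) → EuclideanSpace ℝ (Fin m) → EuclideanSpace ℝ (Fin n)}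
  {X : Set (EuclideanSpace ℝ (Fin n))} {U : Set (EuclideanSpace ℝ (Fin m))}

theorem traj_const_of_eq {xe : EuclideanSpace ℝ (Fin n)} {ue : EuclideanSpace ℝ (Fin m)}
    (heq : f xe ue = xe) (t : ℕ) : traj f xe (fun _ ↦ ue) t = xe := by
  induction t with
  | zero => rfl
  | succ t ih => simp only [traj, ih, heq]

theorem admissible_const_of_eq {xe : EuclideanSpace ℝ (Fin n)} {ue : EuclideanSpace ℝ (Fin m)}
    (hxe : xe ∈ X) (hue : ue ∈ U) (heq : f xe ue = xe) (T : ℕ) :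
    Admissible f X U xe (fun _ ↦ ue) T :=
  ⟨fun _ _ ↦ hue, fun t _ ↦ by rw [traj_const_of_eq heq]; exact hxe⟩

theorem Admissible.mono {x0 : EuclideanSpace ℝ (Fin n)} {u : ℕ → EuclideanSpace ℝ (Fin m)}
    {T T' : ℕ} (hu : Admissible f X U x0 u T) (hT : T' ≤ T) : Admissible f X U x0 u T' :=
  ⟨fun t ht ↦ hu.1 t (ht.trans_le hT), fun t ht ↦ hu.2 t (ht.trans hT)⟩

variable {ℓ : EuclideanSpace ℝ (Fin n) → EuclideanSpace ℝ (Fin m) → ℝ}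
  {lam σ : EuclideanSpace ℝ (Fin n) → ℝ} {c : ℝ}

/-- The dissipation inequality summed along an admissible trajectory. -/
theorem Admissible.storage_add_sum_le
    (hdiss : ∀ x ∈ X, ∀ v ∈ U, f x v ∈ X → lam (f x v) ≤ lam x + ℓ x v - c - σ x)
    {x0 : EuclideanSpace ℝ (Fin n)} {u : ℕ → EuclideanSpace ℝ (Fin m)} {T : ℕ}
    (hu : Admissible f X U x0 u T) :
    lam (traj f x0 u T) + ∑ t ∈ range T, σ (traj f x0 u t) ≤ lam x0 + cost f ℓ T x0 u - T * c := by
  induction T with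
  | zero => simp [traj, cost]
  | succ T ih =>
    have hstep := hdiss _ (hu.2 T T.le_succ) _ (hu.1 T T.lt_succ_self) (hu.2 (T + 1) le_rfl)
    have := ih (hu.mono T.le_succ)
    simp only [cost, sum_range_succ, traj, Nat.cast_succ] at this hstep ⊢
    linarith

theorem bddBelow_costs
    (hdiss : ∀ x ∈ X, ∀ v ∈ U, f x v ∈ X → lam (f x v) ≤ lam x + ℓ x v - c - σ x)
    (hσ : ∀ x, 0 ≤ σ x) {D : ℝ} (hlam : ∀ x ∈ X, -D ≤ lam x) (T : ℕ)
    (x0 : EuclideanSpace ℝ (Fin n)) :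
    BddBelow {J | ∃ u, Admissible f X U x0 u T ∧ J = cost f ℓ T x0 u} := by
  refine ⟨T * c - D - lam x0, ?_⟩
  rintro _ ⟨u, hu, rfl⟩
  have := hu.storage_add_sum_le hdiss
  have := hlam _ (hu.2 T le_rfl)
  have := sum_nonneg fun t (_ : t ∈ range T) ↦ hσ (traj f x0 u t)
  linarith

theorem sInf_costs_equilibrium_le {xe : EuclideanSpace ℝ (Fin n)} {ue : EuclideanSpace ℝ (Fin m)}
    (hxe : xe ∈ X) (hue : ue ∈ U) (heq : f xe ue = xe)
    (hdiss : ∀ x ∈ X, ∀ v ∈ U, f x v ∈ X → lam (f x v) ≤ lam x + ℓ x v - c - σ x)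
    (hσ : ∀ x, 0 ≤ σ x) {D : ℝ} (hlam : ∀ x ∈ X, -D ≤ lam x) (T : ℕ) :
    sInf {J | ∃ u, Admissible f X U xe u T ∧ J = cost f ℓ T xe u} ≤ T * ℓ xe ue := by
  refine csInf_le (bddBelow_costs hdiss hσ hlam T xe)
    ⟨fun _ ↦ ue, admissible_const_of_eq hxe hue heq T, ?_⟩
  simp [cost, traj_const_of_eq heq]

end ControlSystem

theorem strict_dissipativity_implies_turnpike_general {n m : ℕ}
    (f : EuclideanSpace ℝ (Fin n) → EuclideanSpace ℝ (Fin m) → EuclideanSpace ℝ (Fin n))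
    (X : Set (EuclideanSpace ℝ (Fin n))) (U : Set (EuclideanSpace ℝ (Fin m)))
    (ℓ : EuclideanSpace ℝ (Fin n) → EuclideanSpace ℝ (Fin m) → ℝ)
    (J : ℕ → EuclideanSpace ℝ (Fin n) → (ℕ → EuclideanSpace ℝ (Fin m)) → ℝ)
    (hJ : ∀ T x0 u, J T x0 u = ∑ t ∈ Finset.range T, ℓ (traj f x0 u t) (u t))
    (V : ℕ → EuclideanSpace ℝ (Fin n) → ℝ)
    (hV : ∀ T x0, V T x0 = sInf {c : ℝ | ∃ u, Admissible f X U x0 u T ∧ c = J T x0 u})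
    (xe : EuclideanSpace ℝ (Fin n)) (ue : EuclideanSpace ℝ (Fin m))
    (hxe : xe ∈ X) (hue : ue ∈ U) (heq : f xe ue = xe)
    (lam : EuclideanSpace ℝ (Fin n) → ℝ) (α : ℝ → ℝ) (hα : KInf α)
    (hdiss : ∀ x ∈ X, ∀ u ∈ U, f x u ∈ X →
      lam (f x u) ≤ lam x + ℓ x u - ℓ xe ue - α ‖x - xe‖)
    (D : ℝ) (hlam : ∀ x ∈ X, -D ≤ lam x)
    (γ : ℝ → ℝ) (hγ : KInf γ) (C : ℝ)
    (hVbound : ∀ x ∈ X, ∀ T : ℕ, |V T x - V T xe| ≤ γ ‖x - xe‖ + C)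
    (hlambound : ∀ x ∈ X, |lam x| ≤ γ ‖x - xe‖ + C) :
    ∀ ε > (0:ℝ), ∀ K > (0:ℝ), ∀ T : ℕ, ∀ x0 ∈ X, ‖x0 - xe‖ ≤ K →
      ∀ u : ℕ → EuclideanSpace ℝ (Fin m),
        Admissible f X U x0 u T → J T x0 u = V T x0 →
        (((Finset.range T).filter (fun t => ε < ‖traj f x0 u t - xe‖)).card : ℝ) ≤
          (2 * γ K + 2 * C + D) / α ε := by
  intro ε hε K _ T x0 hx0 hx0K u hu hopt
  obtain rfl : J = cost f ℓ := funext₂ fun T x0 ↦ funext (hJ T x0)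
  have hσ (x : EuclideanSpace ℝ (Fin n)) : 0 ≤ α ‖x - xe‖ := hα.nonneg (norm_nonneg _)
  have hVe : V T xe ≤ T * ℓ xe ue :=
    hV T xe ▸ sInf_costs_equilibrium_le hxe hue heq hdiss hσ hlam T
  have hγK : γ ‖x0 - xe‖ ≤ γ K := hγ.monotoneOn (norm_nonneg _) ((norm_nonneg _).trans hx0K) hx0K
  have hsum : ∑ t ∈ range T, α ‖traj f x0 u t - xe‖ ≤ 2 * γ K + 2 * C + D := by
    have := hu.storage_add_sum_le hdiss
    have := hlam _ (hu.2 T le_rfl)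
    have := (le_abs_self _).trans (hlambound x0 hx0)
    have := (le_abs_self _).trans (hVbound x0 hx0 T)
    linarith
  rw [le_div_iff₀ (hα.pos hε)]
  exact (hα.card_filter_lt_mul_le_sum _ (fun _ ↦ norm_nonneg _) hε.le).trans hsum

/-- Strict dissipativity implies the turnpike property: for every optimal trajectory starting
in `B_K(xᵉ)`, the number of times `t < T` with `‖x(t)−xᵉ‖ > ε` is bounded by
`(2γ(K) + 2C + D)/α(ε)`, a bound independent of the horizon `T` and of `x0`. -/
theorem strict_dissipativity_implies_turnpike {n m : ℕ}
    (f : EuclideanSpace ℝ (Fin n) → EuclideanSpace ℝ (Fin m) → EuclideanSpace ℝ (Fin n))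
    (X : Set (EuclideanSpace ℝ (Fin n))) (U : Set (EuclideanSpace ℝ (Fin m)))
    (ℓ : EuclideanSpace ℝ (Fin n) → EuclideanSpace ℝ (Fin m) → ℝ)
    (J : ℕ → EuclideanSpace ℝ (Fin n) → (ℕ → EuclideanSpace ℝ (Fin m)) → ℝ)
    (hJ : ∀ T x0 u, J T x0 u = ∑ t ∈ Finset.range T, ℓ (traj f x0 u t) (u t))
    (V : ℕ → EuclideanSpace ℝ (Fin n) → ℝ)
    (hV : ∀ T x0, V T x0 = sInf {c : ℝ | ∃ u, Admissible f X U x0 u T ∧ c = J T x0 u})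
    (xe : EuclideanSpace ℝ (Fin n)) (ue : EuclideanSpace ℝ (Fin m))
    (hxe : xe ∈ X) (hue : ue ∈ U) (heq : f xe ue = xe)
    (lam : EuclideanSpace ℝ (Fin n) → ℝ) (α : ℝ → ℝ) (hα : KInf α)
    (hdiss : ∀ x ∈ X, ∀ u ∈ U, f x u ∈ X →
      lam (f x u) ≤ lam x + ℓ x u - ℓ xe ue - α ‖x - xe‖)
    (D : ℝ) (hD : 0 < D) (hlam : ∀ x ∈ X, -D ≤ lam x)
    (γ : ℝ → ℝ) (hγ : KInf γ) (C : ℝ) (hC : 0 < C)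
    (hVbound : ∀ x ∈ X, ∀ T : ℕ, |V T x - V T xe| ≤ γ ‖x - xe‖ + C)
    (hlambound : ∀ x ∈ X, |lam x| ≤ γ ‖x - xe‖ + C) :
    ∀ ε > (0:ℝ), ∀ K > (0:ℝ), ∀ T : ℕ, ∀ x0 ∈ X, ‖x0 - xe‖ ≤ K →
      ∀ u : ℕ → EuclideanSpace ℝ (Fin m),
        Admissible f X U x0 u T → J T x0 u = V T x0 →
        (((Finset.range T).filter (fun t => ε < ‖traj f x0 u t - xe‖)).card : ℝ) ≤
          (2 * γ K + 2 * C + D) / α ε :=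
  strict_dissipativity_implies_turnpike_general f X U ℓ J hJ V hV xe ue hxe hue heq lam α hα hdiss D
    hlam γ hγ C hVbound hlambound
end

section
/- (Dissipativity implies optimal operation at steady state.) Assume the discrete-time system is dissipative in one-step form with supply rate s(x,u) = ℓ(x,u) − ℓ(x^e,u^e) and storage function λ : X → ℝ satisfying λ(x) ≥ −D for all x ∈ X, i.e., λ(f(x,u)) ≤ λ(x) + ℓ(x,u) − ℓ(x^e,u^e) for all x ∈ X, u ∈ U with f(x,u) ∈ X. Then for every x0 ∈ X and every control sequence u : ℕ → ℝ^m that is admissible for x0 on every horizon T, one has liminf_{T→∞} (1/T) J_T(x0,u) ≥ ℓ(x^e,u^e). -/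
/-!
Summing the dissipation inequality along an admissible trajectory telescopes to
`λ(x(T)) ≤ λ(x0) + J_T(x0,u) - T ℓ(xᵉ,uᵉ)`. Since `λ ≥ -D` on `X`, this gives
`J_T(x0,u) / T ≥ ℓ(xᵉ,uᵉ) - (D + λ(x0)) / T`, and the right-hand side tends to `ℓ(xᵉ,uᵉ)`.
-/

open Filter Finset

theorem le_add_sum_sub_mul_of_succ_le {s c : ℕ → ℝ} {L : ℝ} {T : ℕ}
    (h : ∀ t < T, s (t + 1) ≤ s t + c t - L) :
    s T ≤ s 0 + ∑ t ∈ range T, c t - T * L := by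
  induction T with
  | zero => simp
  | succ T ih =>
    have hT := h T T.lt_succ_self
    have ih := ih fun t ht => h t (Nat.lt_succ_of_lt ht)
    rw [sum_range_succ]
    push_cast
    linarith

theorem storage_traj_le_of_admissible {n m : ℕ}
    {f : EuclideanSpace ℝ (Fin n) → EuclideanSpace ℝ (Fin m) → EuclideanSpace ℝ (Fin n)}
    {X : Set (EuclideanSpace ℝ (Fin n))} {U : Set (EuclideanSpace ℝ (Fin m))}
    {ℓ : EuclideanSpace ℝ (Fin n) → EuclideanSpace ℝ (Fin m) → ℝ}
    {lam : EuclideanSpace ℝ (Fin n) → ℝ} {L : ℝ}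
    (hdiss : ∀ x ∈ X, ∀ u ∈ U, f x u ∈ X → lam (f x u) ≤ lam x + ℓ x u - L)
    {x0 : EuclideanSpace ℝ (Fin n)} {u : ℕ → EuclideanSpace ℝ (Fin m)} {T : ℕ}
    (hadm : Admissible f X U x0 u T) :
    lam (traj f x0 u T) ≤ lam x0 + ∑ t ∈ range T, ℓ (traj f x0 u t) (u t) - T * L :=
  le_add_sum_sub_mul_of_succ_le (s := fun t => lam (traj f x0 u t))
    (c := fun t => ℓ (traj f x0 u t) (u t)) fun t ht =>
    hdiss _ (hadm.2 t ht.le) _ (hadm.1 t ht) (hadm.2 (t + 1) ht)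

theorem EReal.coe_le_liminf_of_tendsto_of_eventually_le {ι : Type*} {l : Filter ι} [l.NeBot]
    {a b : ι → ℝ} {L : ℝ} (hb : Tendsto b l (nhds L)) (hba : ∀ᶠ i in l, b i ≤ a i) :
    (L : EReal) ≤ liminf (fun i => (a i : EReal)) l := by
  have hb' : Tendsto (fun i => (b i : EReal)) l (nhds (L : EReal)) :=
    (continuous_coe_real_ereal.tendsto L).comp hb
  rw [← hb'.liminf_eq]
  exact liminf_le_liminf (hba.mono fun i hi => EReal.coe_le_coe_iff.2 hi)

theorem dissipativity_implies_optimal_operation_at_steady_state_general {n m : ℕ}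
    (f : EuclideanSpace ℝ (Fin n) → EuclideanSpace ℝ (Fin m) → EuclideanSpace ℝ (Fin n))
    (X : Set (EuclideanSpace ℝ (Fin n))) (U : Set (EuclideanSpace ℝ (Fin m)))
    (ℓ : EuclideanSpace ℝ (Fin n) → EuclideanSpace ℝ (Fin m) → ℝ)
    (xe : EuclideanSpace ℝ (Fin n)) (ue : EuclideanSpace ℝ (Fin m))
    (lam : EuclideanSpace ℝ (Fin n) → ℝ)
    (D : ℝ) (hlam : ∀ x ∈ X, -D ≤ lam x)
    (hdiss : ∀ x ∈ X, ∀ u ∈ U, f x u ∈ X →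
      lam (f x u) ≤ lam x + ℓ x u - ℓ xe ue) :
    ∀ x0 ∈ X, ∀ u : ℕ → EuclideanSpace ℝ (Fin m),
      (∀ T : ℕ, Admissible f X U x0 u T) →
      (ℓ xe ue : EReal) ≤ Filter.liminf
        (fun T : ℕ => (((∑ t ∈ Finset.range T, ℓ (traj f x0 u t) (u t)) / T : ℝ) : EReal))
        Filter.atTop := by
  intro x0 _ u hadm
  set C := D + lam x0
  have hC : Tendsto (fun T : ℕ => ℓ xe ue - C / T) atTop (nhds (ℓ xe ue)) := by
    simpa using tendsto_const_nhds.sub (tendsto_const_div_atTop_nhds_zero_nat C)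
  refine EReal.coe_le_liminf_of_tendsto_of_eventually_le hC ?_
  filter_upwards [eventually_gt_atTop 0] with T hT
  have hTpos : (0 : ℝ) < T := Nat.cast_pos.2 hT
  have hstore := storage_traj_le_of_admissible hdiss (hadm T)
  have hbound := hlam _ ((hadm T).2 T le_rfl)
  rw [sub_div' hTpos.ne', div_le_div_iff_of_pos_right hTpos]
  linarith

/-- Dissipativity implies optimal operation at steady state: for every control that is
admissible on every horizon, `liminf_{T→∞} (1/T) J_T(x0,u) ≥ ℓ(xᵉ,uᵉ)`. -/
theorem dissipativity_implies_optimal_operation_at_steady_state {n m : ℕ}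
    (f : EuclideanSpace ℝ (Fin n) → EuclideanSpace ℝ (Fin m) → EuclideanSpace ℝ (Fin n))
    (X : Set (EuclideanSpace ℝ (Fin n))) (U : Set (EuclideanSpace ℝ (Fin m)))
    (ℓ : EuclideanSpace ℝ (Fin n) → EuclideanSpace ℝ (Fin m) → ℝ)
    (xe : EuclideanSpace ℝ (Fin n)) (ue : EuclideanSpace ℝ (Fin m))
    (hxe : xe ∈ X) (hue : ue ∈ U) (heq : f xe ue = xe)
    (lam : EuclideanSpace ℝ (Fin n) → ℝ)
    (D : ℝ) (hlam : ∀ x ∈ X, -D ≤ lam x)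
    (hdiss : ∀ x ∈ X, ∀ u ∈ U, f x u ∈ X →
      lam (f x u) ≤ lam x + ℓ x u - ℓ xe ue) :
    ∀ x0 ∈ X, ∀ u : ℕ → EuclideanSpace ℝ (Fin m),
      (∀ T : ℕ, Admissible f X U x0 u T) →
      (ℓ xe ue : EReal) ≤ Filter.liminf
        (fun T : ℕ => (((∑ t ∈ Finset.range T, ℓ (traj f x0 u t) (u t)) / T : ℝ) : EReal))
        Filter.atTop :=
  dissipativity_implies_optimal_operation_at_steady_state_general f X U ℓ xe ue lam D hlam hdiss
end

section
/- (The available storage is a storage function.) Let s : ℝ^n × ℝ^m → ℝ be a supply rate, α ∈ K∞ and x^e ∈ X. For x0 ∈ X define the available storage V(x0) := sup over all T ∈ ℕ and all controls u admissible for x0 on horizon T of Σ_{t=0}^{T−1} ( −s(x(t),u(t)) + α(‖x(t)−x^e‖) ), and assume this supremum is finite for every x0 ∈ X. Then V(x0) ≥ 0 for all x0 ∈ X, and for every x0 ∈ X, every t ∈ ℕ and every control u admissible for x0 on horizon t, the strict dissipation inequality V(x(t)) ≤ V(x0) + Σ_{τ=0}^{t−1} ( s(x(τ),u(τ)) − α(‖x(τ)−x^e‖)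 ) holds; i.e., λ = V is a storage function certifying strict dissipativity. -/
open Finset

section Concatenation

variable {n m : ℕ}
  {f : EuclideanSpace ℝ (Fin n) → EuclideanSpace ℝ (Fin m) → EuclideanSpace ℝ (Fin n)}
  {X : Set (EuclideanSpace ℝ (Fin n))} {U : Set (EuclideanSpace ℝ (Fin m))}
  {x0 : EuclideanSpace ℝ (Fin n)}

theorem traj_congr {u v : ℕ → EuclideanSpace ℝ (Fin m)} {t : ℕ} (h : ∀ τ < t, u τ = v τ) :
    ∀ τ ≤ t, traj f x0 u τ = traj f x0 v τ
  | 0, _ => rfl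
  | τ + 1, hτ => by
    simp only [traj, traj_congr h τ (Nat.le_of_succ_le hτ), h τ hτ]

theorem traj_add (u : ℕ → EuclideanSpace ℝ (Fin m)) (t : ℕ) :
    ∀ k, traj f x0 u (t + k) = traj f (traj f x0 u t) (fun k => u (t + k)) k
  | 0 => rfl
  | k + 1 => by
    show traj f x0 u (t + k + 1) = _
    simp only [traj, traj_add u t k]

def concatControl (u : ℕ → EuclideanSpace ℝ (Fin m)) (t : ℕ) (u' : ℕ → EuclideanSpace ℝ (Fin m)) :
    ℕ → EuclideanSpace ℝ (Fin m) :=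
  fun τ => if τ < t then u τ else u' (τ - t)

variable {u u' : ℕ → EuclideanSpace ℝ (Fin m)} {t T : ℕ}

theorem concatControl_of_lt {τ : ℕ} (hτ : τ < t) : concatControl u t u' τ = u τ := if_pos hτ

theorem concatControl_add (k : ℕ) : concatControl u t u' (t + k) = u' k := by
  simp [concatControl]

theorem traj_concatControl_of_le {τ : ℕ} (hτ : τ ≤ t) :
    traj f x0 (concatControl u t u') τ = traj f x0 u τ :=
  traj_congr (fun _ => concatControl_of_lt) τ hτ

theorem traj_concatControl_add (k : ℕ) :
    traj f x0 (concatControl u t u') (t + k) = traj f (traj f x0 u t) u' k := by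
  rw [traj_add, traj_concatControl_of_le le_rfl]
  simp only [concatControl_add]

theorem Admissible.concatControl (hu : Admissible f X U x0 u t)
    (hu' : Admissible f X U (traj f x0 u t) u' T) :
    Admissible f X U x0 (concatControl u t u') (t + T) := by
  constructor
  · intro τ hτ
    rcases lt_or_ge τ t with hτt | htτ
    · rw [concatControl_of_lt hτt]
      exact hu.1 τ hτt
    · obtain ⟨k, rfl⟩ := Nat.exists_eq_add_of_le htτ
      rw [concatControl_add]
      exact hu'.1 k (by omega)
  · intro τ hτ
    rcases le_or_gt τ t with hτt | htτ
    · rw [traj_concatControl_of_le hτt]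
      exact hu.2 τ hτt
    · obtain ⟨k, rfl⟩ := Nat.exists_eq_add_of_le htτ.le
      rw [traj_concatControl_add]
      exact hu'.2 k (by omega)

theorem sum_range_concatControl (ℓ : EuclideanSpace ℝ (Fin n) → EuclideanSpace ℝ (Fin m) → ℝ) :
    ∑ τ ∈ range (t + T), ℓ (traj f x0 (concatControl u t u') τ) (concatControl u t u' τ) =
      ∑ τ ∈ range t, ℓ (traj f x0 u τ) (u τ) +
        ∑ k ∈ range T, ℓ (traj f (traj f x0 u t) u' k) (u' k) := by
  rw [sum_range_add]
  congr 1
  · refine sum_congr rfl fun τ hτ => ?_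
    have hτt := mem_range.mp hτ
    rw [traj_concatControl_of_le hτt.le, concatControl_of_lt hτt]
  · simp only [traj_concatControl_add, concatControl_add]

end Concatenation

section AdmissibleSums

variable {n m : ℕ}
  (f : EuclideanSpace ℝ (Fin n) → EuclideanSpace ℝ (Fin m) → EuclideanSpace ℝ (Fin n))
  (X : Set (EuclideanSpace ℝ (Fin n))) (U : Set (EuclideanSpace ℝ (Fin m)))
  (ℓ : EuclideanSpace ℝ (Fin n) → EuclideanSpace ℝ (Fin m) → ℝ)

def admissibleSums (x0 : EuclideanSpace ℝ (Fin n)) : Set ℝ :=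
  {c | ∃ T : ℕ, ∃ u, Admissible f X U x0 u T ∧
    c = ∑ t ∈ range T, ℓ (traj f x0 u t) (u t)}

variable {f X U ℓ} {x0 : EuclideanSpace ℝ (Fin n)}

theorem zero_mem_admissibleSums (hx0 : x0 ∈ X) : 0 ∈ admissibleSums f X U ℓ x0 :=
  ⟨0, fun _ => 0, ⟨fun _ h => absurd h (Nat.not_lt_zero _), fun _ h => by
    rwa [Nat.le_zero.mp h]⟩, by simp⟩

theorem sum_add_mem_admissibleSums {u : ℕ → EuclideanSpace ℝ (Fin m)} {t : ℕ} {c : ℝ}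
    (hu : Admissible f X U x0 u t) (hc : c ∈ admissibleSums f X U ℓ (traj f x0 u t)) :
    ∑ τ ∈ range t, ℓ (traj f x0 u τ) (u τ) + c ∈ admissibleSums f X U ℓ x0 := by
  obtain ⟨T, u', hu', rfl⟩ := hc
  exact ⟨t + T, concatControl u t u', hu.concatControl hu', (sum_range_concatControl ℓ).symm⟩

end AdmissibleSums

theorem available_storage_is_storage_function_general {n m : ℕ}
    (f : EuclideanSpace ℝ (Fin n) → EuclideanSpace ℝ (Fin m) → EuclideanSpace ℝ (Fin n))
    (X : Set (EuclideanSpace ℝ (Fin n))) (U : Set (EuclideanSpace ℝ (Fin m)))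
    (s : EuclideanSpace ℝ (Fin n) → EuclideanSpace ℝ (Fin m) → ℝ)
    (α : ℝ → ℝ)
    (xe : EuclideanSpace ℝ (Fin n))
    (V : EuclideanSpace ℝ (Fin n) → ℝ)
    (hVdef : ∀ x0, V x0 = sSup {c : ℝ | ∃ T : ℕ, ∃ u, Admissible f X U x0 u T ∧
      c = ∑ t ∈ Finset.range T, (-s (traj f x0 u t) (u t) + α ‖traj f x0 u t - xe‖)})
    (hfin : ∀ x0 ∈ X, BddAbove {c : ℝ | ∃ T : ℕ, ∃ u, Admissible f X U x0 u T ∧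
      c = ∑ t ∈ Finset.range T, (-s (traj f x0 u t) (u t) + α ‖traj f x0 u t - xe‖)}) :
    (∀ x0 ∈ X, 0 ≤ V x0) ∧
    (∀ x0 ∈ X, ∀ t : ℕ, ∀ u : ℕ → EuclideanSpace ℝ (Fin m), Admissible f X U x0 u t →
      V (traj f x0 u t) ≤ V x0 +
        ∑ τ ∈ Finset.range t, (s (traj f x0 u τ) (u τ) - α ‖traj f x0 u τ - xe‖)) := by
  set ℓ := fun x v => -s x v + α ‖x - xe‖
  change ∀ x0, V x0 = sSup (admissibleSums f X U ℓ x0) at hVdef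
  change ∀ x0 ∈ X, BddAbove (admissibleSums f X U ℓ x0) at hfin
  refine ⟨fun x0 hx0 => hVdef x0 ▸ le_csSup (hfin x0 hx0) (zero_mem_admissibleSums hx0), ?_⟩
  intro x0 hx0 t u hu
  have hsum : ∑ τ ∈ range t, (s (traj f x0 u τ) (u τ) - α ‖traj f x0 u τ - xe‖) =
      -∑ τ ∈ range t, ℓ (traj f x0 u τ) (u τ) := by
    rw [← sum_neg_distrib]
    exact sum_congr rfl fun _ _ => by ring
  rw [hVdef, hVdef, hsum, ← sub_eq_add_neg]
  refine csSup_le ⟨0, zero_mem_admissibleSums (hu.2 t le_rfl)⟩ fun c hc => ?_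
  rw [le_sub_iff_add_le']
  exact le_csSup (hfin x0 hx0) (sum_add_mem_admissibleSums hu hc)

/-- The available storage
`V(x0) = sup_{T, u admissible} Σ_{t<T} (−s(x(t),u(t)) + α(‖x(t)−xᵉ‖))`,
if finite, is nonnegative and is a storage function certifying strict dissipativity. -/
theorem available_storage_is_storage_function {n m : ℕ}
    (f : EuclideanSpace ℝ (Fin n) → EuclideanSpace ℝ (Fin m) → EuclideanSpace ℝ (Fin n))
    (X : Set (EuclideanSpace ℝ (Fin n))) (U : Set (EuclideanSpace ℝ (Fin m)))
    (s : EuclideanSpace ℝ (Fin n) → EuclideanSpace ℝ (Fin m) → ℝ)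
    (α : ℝ → ℝ) (hα : KInf α)
    (xe : EuclideanSpace ℝ (Fin n)) (hxe : xe ∈ X)
    (V : EuclideanSpace ℝ (Fin n) → ℝ)
    (hVdef : ∀ x0, V x0 = sSup {c : ℝ | ∃ T : ℕ, ∃ u, Admissible f X U x0 u T ∧
      c = ∑ t ∈ Finset.range T, (-s (traj f x0 u t) (u t) + α ‖traj f x0 u t - xe‖)})
    (hfin : ∀ x0 ∈ X, BddAbove {c : ℝ | ∃ T : ℕ, ∃ u, Admissible f X U x0 u T ∧
      c = ∑ t ∈ Finset.range T, (-s (traj f x0 u t) (u t) + α ‖traj f x0 u t - xe‖)}) :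
    (∀ x0 ∈ X, 0 ≤ V x0) ∧
    (∀ x0 ∈ X, ∀ t : ℕ, ∀ u : ℕ → EuclideanSpace ℝ (Fin m), Admissible f X U x0 u t →
      V (traj f x0 u t) ≤ V x0 +
        ∑ τ ∈ Finset.range t, (s (traj f x0 u τ) (u τ) - α ‖traj f x0 u τ - xe‖)) :=
  available_storage_is_storage_function_general f X U s α xe V hVdef hfin
end

section
/- (Optimal averaged performance of MPC with terminal conditions.) Assume the discrete-time system is dissipative in one-step form with supply rate ℓ(x,u) − ℓ(x^e,u^e) and storage function λ : X → ℝ bounded from below, i.e., λ(f(x,u)) ≤ λ(x) + ℓ(x,u) − ℓ(x^e,u^e) for all x ∈ X, u ∈ U with f(x,u) ∈ X. Let V : X → ℝ be bounded from below and let x_MPC : ℕ → X, u_MPC : ℕ → U satisfy x_MPC(k+1) = f(x_MPC(k), u_MPC(k)) and the decrease condition V(x_MPC(k+1)) ≤ V(x_MPC(k)) − ℓ(x_MPC(k),u_MPC(k)) + ℓ(x^e,u^e) for all k ∈ ℕ. Then the averaged infinite-horizon closed-loop performance satisfies lim_{S→∞} (1/S) Σ_{k=0}^{S−1} ℓ(x_MPC(k),u_MPC(k))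 = ℓ(x^e,u^e). -/
open Filter Topology Finset

/-! Summing the decrease condition telescopes to `∑_{k<S} ℓₖ ≤ S ℓ(xᵉ,uᵉ) + V(x₀) − V(x_S)`, and
summing the dissipation inequality along the closed loop gives
`∑_{k<S} ℓₖ ≥ S ℓ(xᵉ,uᵉ) + λ(x_S) − λ(x₀)`. Since `V` and `λ` are bounded below, the sum stays within
a bounded distance of `S ℓ(xᵉ,uᵉ)`, so its average tends to `ℓ(xᵉ,uᵉ)`. -/

theorem Finset.sum_range_le_of_le_sub_succ_add {a W : ℕ → ℝ} {c : ℝ}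
    (h : ∀ k, a k ≤ W k - W (k + 1) + c) (S : ℕ) :
    ∑ k ∈ range S, a k ≤ W 0 - W S + S * c := by
  calc ∑ k ∈ range S, a k ≤ ∑ k ∈ range S, (W k - W (k + 1) + c) := sum_le_sum fun k _ => h k
    _ = W 0 - W S + S * c := by rw [sum_add_distrib, sum_range_sub', sum_const, card_range, nsmul_eq_mul]

theorem Finset.le_sum_range_of_succ_sub_add_le {a W : ℕ → ℝ} {c : ℝ}
    (h : ∀ k, W (k + 1) - W k + c ≤ a k) (S : ℕ) :
    W S - W 0 + S * c ≤ ∑ k ∈ range S, a k := by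
  calc W S - W 0 + S * c = ∑ k ∈ range S, (W (k + 1) - W k + c) := by
        rw [sum_add_distrib, sum_range_sub, sum_const, card_range, nsmul_eq_mul]
    _ ≤ ∑ k ∈ range S, a k := sum_le_sum fun k _ => h k

theorem tendsto_div_natCast_of_sub_mul_bounded {s : ℕ → ℝ} {c C₁ C₂ : ℝ}
    (hlo : ∀ S : ℕ, S * c - C₁ ≤ s S) (hhi : ∀ S : ℕ, s S ≤ S * c + C₂) :
    Tendsto (fun S : ℕ => s S / S) atTop (𝓝 c) := by
  have hlim : ∀ C : ℝ, Tendsto (fun S : ℕ => c + C / S) atTop (𝓝 c) := fun C => by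
    simpa using (tendsto_const_div_atTop_nhds_zero_nat C).const_add c
  refine tendsto_of_tendsto_of_tendsto_of_le_of_le' (hlim (-C₁)) (hlim C₂) ?_ ?_ <;>
    filter_upwards [eventually_gt_atTop 0] with S hS <;>
    have hS' : (0 : ℝ) < S := Nat.cast_pos.mpr hS
  · rw [le_div_iff₀ hS', add_mul, div_mul_cancel₀ _ hS'.ne']
    linarith [hlo S]
  · rw [div_le_iff₀ hS', add_mul, div_mul_cancel₀ _ hS'.ne']
    linarith [hhi S]

theorem mpc_average_performance_optimal_general {n m : ℕ}
    (f : EuclideanSpace ℝ (Fin n) → EuclideanSpace ℝ (Fin m) → EuclideanSpace ℝ (Fin n))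
    (X : Set (EuclideanSpace ℝ (Fin n))) (U : Set (EuclideanSpace ℝ (Fin m)))
    (ℓ : EuclideanSpace ℝ (Fin n) → EuclideanSpace ℝ (Fin m) → ℝ)
    (xe : EuclideanSpace ℝ (Fin n)) (ue : EuclideanSpace ℝ (Fin m))
    (lam : EuclideanSpace ℝ (Fin n) → ℝ)
    (Clam : ℝ) (hlambd : ∀ x ∈ X, -Clam ≤ lam x)
    (hdiss : ∀ x ∈ X, ∀ u ∈ U, f x u ∈ X →
      lam (f x u) ≤ lam x + ℓ x u - ℓ xe ue)
    (V : EuclideanSpace ℝ (Fin n) → ℝ)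
    (B : ℝ) (hVbd : ∀ x ∈ X, -B ≤ V x)
    (xM : ℕ → EuclideanSpace ℝ (Fin n)) (uM : ℕ → EuclideanSpace ℝ (Fin m))
    (hxM : ∀ k, xM k ∈ X) (huM : ∀ k, uM k ∈ U)
    (hdyn : ∀ k, xM (k + 1) = f (xM k) (uM k))
    (hdec : ∀ k, V (xM (k + 1)) ≤ V (xM k) - ℓ (xM k) (uM k) + ℓ xe ue) :
    Filter.Tendsto
      (fun S : ℕ => (∑ k ∈ Finset.range S, ℓ (xM k) (uM k)) / S)
      Filter.atTop (nhds (ℓ xe ue)) := by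
  have hdiss_loop : ∀ k, lam (xM (k + 1)) ≤ lam (xM k) + ℓ (xM k) (uM k) - ℓ xe ue := fun k => by
    rw [hdyn]
    exact hdiss _ (hxM k) _ (huM k) (hdyn k ▸ hxM (k + 1))
  have hsum_ge := le_sum_range_of_succ_sub_add_le (a := fun k => ℓ (xM k) (uM k))
    (W := fun k => lam (xM k)) (c := ℓ xe ue)
    fun k => by linarith [hdiss_loop k]
  have hsum_le := sum_range_le_of_le_sub_succ_add (a := fun k => ℓ (xM k) (uM k))
    (W := fun k => V (xM k)) (c := ℓ xe ue)
    fun k => by linarith [hdec k]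
  refine tendsto_div_natCast_of_sub_mul_bounded (C₁ := lam (xM 0) + Clam) (C₂ := V (xM 0) + B)
    (fun S => ?_) (fun S => ?_)
  · linarith [hsum_ge S, hlambd _ (hxM S)]
  · linarith [hsum_le S, hVbd _ (hxM S)]

/-- Optimal averaged performance of MPC with terminal conditions: if the system is
dissipative with supply rate `ℓ(x,u) − ℓ(xᵉ,uᵉ)` and bounded-below storage function, and the
MPC closed loop satisfies the Lyapunov decrease condition with a bounded-below `V`, then the
averaged infinite-horizon closed-loop performance equals `ℓ(xᵉ,uᵉ)`. -/
theorem mpc_average_performance_optimal {n m : ℕ}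
    (f : EuclideanSpace ℝ (Fin n) → EuclideanSpace ℝ (Fin m) → EuclideanSpace ℝ (Fin n))
    (X : Set (EuclideanSpace ℝ (Fin n))) (U : Set (EuclideanSpace ℝ (Fin m)))
    (ℓ : EuclideanSpace ℝ (Fin n) → EuclideanSpace ℝ (Fin m) → ℝ)
    (xe : EuclideanSpace ℝ (Fin n)) (ue : EuclideanSpace ℝ (Fin m))
    (hxe : xe ∈ X) (hue : ue ∈ U) (heq : f xe ue = xe)
    (lam : EuclideanSpace ℝ (Fin n) → ℝ)
    (Clam : ℝ) (hlambd : ∀ x ∈ X, -Clam ≤ lam x)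
    (hdiss : ∀ x ∈ X, ∀ u ∈ U, f x u ∈ X →
      lam (f x u) ≤ lam x + ℓ x u - ℓ xe ue)
    (V : EuclideanSpace ℝ (Fin n) → ℝ)
    (B : ℝ) (hVbd : ∀ x ∈ X, -B ≤ V x)
    (xM : ℕ → EuclideanSpace ℝ (Fin n)) (uM : ℕ → EuclideanSpace ℝ (Fin m))
    (hxM : ∀ k, xM k ∈ X) (huM : ∀ k, uM k ∈ U)
    (hdyn : ∀ k, xM (k + 1) = f (xM k) (uM k))
    (hdec : ∀ k, V (xM (k + 1)) ≤ V (xM k) - ℓ (xM k) (uM k) + ℓ xe ue) :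
    Filter.Tendsto
      (fun S : ℕ => (∑ k ∈ Finset.range S, ℓ (xM k) (uM k)) / S)
      Filter.atTop (nhds (ℓ xe ue)) :=
  mpc_average_performance_optimal_general f X U ℓ xe ue lam Clam hlambd hdiss V B hVbd xM uM hxM huM
    hdyn hdec
end

section
/- (Strict dissipativity with linear storage for strictly convex problems.) Let X ⊆ ℝ^n and U ⊆ ℝ^m be such that X × U is compact and convex, let f : ℝ^n × ℝ^m → ℝ^n be affine, and let ℓ : ℝ^n × ℝ^m → ℝ be continuous and strictly convex on X × U. Let (x^e,u^e) ∈ X × U with f(x^e,u^e) = x^e, and suppose p ∈ ℝ^n is a Lagrange multiplier in the sense that (x^e,u^e) minimizes the function (x,u) ↦ ℓ(x,u) + pᵀ(x − f(x,u)) over X × U. Then there exists α ∈ K∞ such that the linear function λ(x) = pᵀx satisfies λ(f(x,u)) ≤ λ(x) + ℓ(x,u) − ℓ(x^e,u^e) − α(‖x − x^e‖) for all (x,u) ∈ X × U; that is, the problem is strictly dissipative with linear storage function λ(x) = pᵀx. -/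
/-!
The Lagrangian `φ(x, u) = ℓ(x, u) + pᵀ(x − f(x, u))` is strictly convex on `X × U` (a strictly
convex function plus an affine one), so its minimizer `(xᵉ, uᵉ)` is strict and the rotated cost
`φ − φ(xᵉ, uᵉ)` is continuous, nonnegative and positive away from `(xᵉ, uᵉ)`. On the compact set
`X × U` such a function is bounded below by `α(‖x − xᵉ‖)` for some `α ∈ K∞`: the infimum `β(r)`
of the rotated cost over `{‖x − xᵉ‖ ≥ r}` is nondecreasing and positive for `r > 0`, and its
primitive divided by a bound `R + 1` of `‖x − xᵉ‖` is continuous, strictly increasing and, as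
`∫₀ʳ β ≤ r β(r)`, still below `β`. Since `pᵀ(xᵉ − f(xᵉ, uᵉ)) = 0`, the bound
`α(‖x − xᵉ‖) ≤ φ(x, u) − ℓ(xᵉ, uᵉ)` is the dissipation inequality.
-/

open scoped RealInnerProductSpace

open MeasureTheory Set

lemma AffineMap.convexOn {𝕜 E β : Type*} [Field 𝕜] [LinearOrder 𝕜] [AddCommGroup E]
    [Module 𝕜 E] [AddCommGroup β] [PartialOrder β] [Module 𝕜 β] (f : E →ᵃ[𝕜] β) {s : Set E}
    (hs : Convex 𝕜 s) : ConvexOn 𝕜 s f :=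
  ⟨hs, fun _ _ _ _ _ _ _ _ hab => (Convex.combo_affine_apply hab).le⟩

lemma StrictConvexOn.lt_of_isMinOn {𝕜 E β : Type*} [Field 𝕜] [LinearOrder 𝕜]
    [IsStrictOrderedRing 𝕜] [AddCommMonoid E] [SMul 𝕜 E] [AddCommMonoid β] [LinearOrder β]
    [IsOrderedAddMonoid β] [Module 𝕜 β] [PosSMulMono 𝕜 β] {f : E → β} {s : Set E} {x y : E}
    (hf : StrictConvexOn 𝕜 s f) (hfx : IsMinOn f s x) (hx : x ∈ s) (hy : y ∈ s) (hyx : y ≠ x) :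
    f x < f y := by
  refine lt_of_not_ge fun hyle => hyx (hf.eq_of_isMinOn ?_ hfx hy hx)
  exact fun z hz => hyle.trans (hfx hz)

lemma KInf.const_mul {α : ℝ → ℝ} (hα : KInf α) {c : ℝ} (hc : 0 < c) :
    KInf fun r => c * α r := by
  obtain ⟨hcont, hmono, hzero, hnonneg, hunbdd⟩ := hα
  refine ⟨continuousOn_const.mul hcont,
    fun a ha b hb hab => mul_lt_mul_of_pos_left (hmono ha hb hab) hc, by simp [hzero],
    fun r hr => mul_nonneg hc.le (hnonneg r hr), fun M => ?_⟩
  obtain ⟨r, hr, hM⟩ := hunbdd (M / c)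
  exact ⟨r, hr, (div_lt_iff₀' hc).1 hM⟩

lemma Monotone.intervalIntegral_le_sub_mul {h : ℝ → ℝ} (hh : Monotone h) (a b : ℝ) :
    ∫ s in a..b, h s ≤ (b - a) * h b := by
  rcases le_total a b with hab | hba
  · calc ∫ s in a..b, h s ≤ ∫ _ in a..b, h b :=
          intervalIntegral.integral_mono_on hab hh.intervalIntegrable intervalIntegrable_const
            fun s hs => hh hs.2
      _ = (b - a) * h b := by simp
  · calc ∫ s in a..b, h s = -∫ s in b..a, h s := intervalIntegral.integral_symm b a
      _ ≤ -∫ _ in b..a, h b := neg_le_neg <|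
          intervalIntegral.integral_mono_on hba intervalIntegrable_const hh.intervalIntegrable
            fun s hs => hh hs.1
      _ = (b - a) * h b := by simp; ring

lemma kInf_intervalIntegral_of_monotone {h : ℝ → ℝ} (hh : Monotone h)
    (hpos : ∀ s, 0 < s → 0 < h s) : KInf fun r => ∫ s in (0 : ℝ)..r, h s := by
  have hint : ∀ a b : ℝ, IntervalIntegrable h volume a b := fun _ _ => hh.intervalIntegrable
  have hsplit : ∀ a b : ℝ, ∫ s in (0 : ℝ)..b, h s = (∫ s in (0 : ℝ)..a, h s) + ∫ s in a..b, h s :=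
    fun a b => (intervalIntegral.integral_add_adjacent_intervals (hint 0 a) (hint a b)).symm
  have hpos_integral : ∀ a b, 0 ≤ a → a < b → 0 < ∫ s in a..b, h s := fun a b ha hab =>
    intervalIntegral.intervalIntegral_pos_of_pos_on (hint a b)
      (fun s hs => hpos s (ha.trans_lt hs.1)) hab
  have hstrict : StrictMonoOn (fun r => ∫ s in (0 : ℝ)..r, h s) (Ici 0) := fun a ha b _ hab => by
    simp only [hsplit a b]
    linarith [hpos_integral a b ha hab]
  refine ⟨(intervalIntegral.continuous_primitive hint 0).continuousOn, hstrict, by simp,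
    fun r hr => by simpa using hstrict.monotoneOn self_mem_Ici hr hr, fun M => ?_⟩
  have h1 : 0 < h 1 := hpos 1 one_pos
  refine ⟨1 + |M| / h 1, by simp only [mem_Ici]; positivity, ?_⟩
  have hlower : |M| ≤ ∫ s in (1 : ℝ)..1 + |M| / h 1, h s :=
    calc |M| = ∫ _ in (1 : ℝ)..1 + |M| / h 1, h 1 := by simp [div_mul_cancel₀ _ h1.ne']
      _ ≤ _ := intervalIntegral.integral_mono_on (le_add_of_nonneg_right (by positivity))
          intervalIntegrable_const (hint _ _) fun s hs => hh hs.1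
  dsimp only
  linarith [hsplit 1 (1 + |M| / h 1), hpos_integral 0 1 le_rfl one_pos, le_abs_self M]

section CappedInfOnSuperlevel

variable {Z : Type*} {K : Set Z} {L g : Z → ℝ}

/-- The cap `1` stands in for the infimum over an empty superlevel set, where `sInf ∅ = 0` would
spoil positivity. -/
noncomputable def cappedInfOnSuperlevel (K : Set Z) (L g : Z → ℝ) (r : ℝ) : ℝ :=
  sInf (insert 1 (L '' {z ∈ K | r ≤ g z}))

lemma bddBelow_insert_image_superlevel (hL0 : ∀ z ∈ K, 0 ≤ L z) (r : ℝ) :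
    BddBelow (insert 1 (L '' {z ∈ K | r ≤ g z})) :=
  ⟨0, by rintro _ (rfl | ⟨z, hz, rfl⟩); exacts [zero_le_one, hL0 z hz.1]⟩

lemma cappedInfOnSuperlevel_nonneg (hL0 : ∀ z ∈ K, 0 ≤ L z) (r : ℝ) :
    0 ≤ cappedInfOnSuperlevel K L g r :=
  le_csInf (insert_nonempty _ _) <| by
    rintro _ (rfl | ⟨z, hz, rfl⟩); exacts [zero_le_one, hL0 z hz.1]

lemma monotone_cappedInfOnSuperlevel (hL0 : ∀ z ∈ K, 0 ≤ L z) :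
    Monotone (cappedInfOnSuperlevel K L g) := fun _ _ hr =>
  csInf_le_csInf (bddBelow_insert_image_superlevel hL0 _) (insert_nonempty _ _) <|
    insert_subset_insert <| image_mono fun _ hz => ⟨hz.1, hr.trans hz.2⟩

lemma cappedInfOnSuperlevel_le (hL0 : ∀ z ∈ K, 0 ≤ L z) {z : Z} (hz : z ∈ K) :
    cappedInfOnSuperlevel K L g (g z) ≤ L z :=
  csInf_le (bddBelow_insert_image_superlevel hL0 _) (mem_insert_of_mem _ ⟨z, ⟨hz, le_rfl⟩, rfl⟩)

variable [TopologicalSpace Z]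

lemma cappedInfOnSuperlevel_pos (hK : IsCompact K) (hL : ContinuousOn L K) (hg : Continuous g)
    (hpos : ∀ z ∈ K, 0 < g z → 0 < L z) {r : ℝ} (hr : 0 < r) :
    0 < cappedInfOnSuperlevel K L g r := by
  have hcompact : IsCompact {z ∈ K | r ≤ g z} := hK.inter_right (isClosed_le continuous_const hg)
  obtain ⟨m, hm, hmL⟩ := hcompact.exists_forall_le' (hL.mono (sep_subset _ _))
    fun z hz => hpos z hz.1 (hr.trans_le hz.2)
  refine (lt_min one_pos hm).trans_le (le_csInf (insert_nonempty _ _) ?_)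
  rintro _ (rfl | ⟨z, hz, rfl⟩)
  exacts [min_le_left _ _, (min_le_right _ _).trans (hmL z hz)]

theorem exists_kInf_le_of_isCompact (hK : IsCompact K) (hL : ContinuousOn L K)
    (hg : Continuous g) (hL0 : ∀ z ∈ K, 0 ≤ L z) (hpos : ∀ z ∈ K, 0 < g z → 0 < L z) :
    ∃ α, KInf α ∧ ∀ z ∈ K, α (g z) ≤ L z := by
  set β := cappedInfOnSuperlevel K L g
  have hβ : Monotone β := monotone_cappedInfOnSuperlevel hL0
  obtain ⟨R, hR⟩ := hK.bddAbove_image hg.continuousOn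
  have hc : 0 < |R| + 1 := by positivity
  refine ⟨fun r => (|R| + 1)⁻¹ * ∫ s in (0 : ℝ)..r, β s,
    (kInf_intervalIntegral_of_monotone hβ fun s hs =>
      cappedInfOnSuperlevel_pos hK hL hg hpos hs).const_mul (inv_pos.2 hc), fun z hz => ?_⟩
  have hgR : g z ≤ |R| + 1 := (hR ⟨z, hz, rfl⟩).trans (by linarith [le_abs_self R])
  have hβ0 := cappedInfOnSuperlevel_nonneg (g := g) hL0 (g z)
  calc (|R| + 1)⁻¹ * ∫ s in (0 : ℝ)..g z, β s ≤ (|R| + 1)⁻¹ * (g z * β (g z)) := by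
        gcongr; simpa using hβ.intervalIntegral_le_sub_mul 0 (g z)
    _ ≤ β (g z) := by rw [inv_mul_le_iff₀ hc]; nlinarith
    _ ≤ L z := cappedInfOnSuperlevel_le hL0 hz

end CappedInfOnSuperlevel

theorem strict_dissipativity_linear_storage_convex_general {n m : ℕ}
    (X : Set (EuclideanSpace ℝ (Fin n))) (U : Set (EuclideanSpace ℝ (Fin m)))
    (hcomp : IsCompact (X ×ˢ U))
    (f : EuclideanSpace ℝ (Fin n) → EuclideanSpace ℝ (Fin m) → EuclideanSpace ℝ (Fin n))
    (A : (EuclideanSpace ℝ (Fin n) × EuclideanSpace ℝ (Fin m)) →ᵃ[ℝ] EuclideanSpace ℝ (Fin n))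
    (hf : ∀ x u, f x u = A (x, u))
    (ℓ : EuclideanSpace ℝ (Fin n) → EuclideanSpace ℝ (Fin m) → ℝ)
    (hℓcont : ContinuousOn (fun p : EuclideanSpace ℝ (Fin n) × EuclideanSpace ℝ (Fin m) =>
      ℓ p.1 p.2) (X ×ˢ U))
    (hℓconv : StrictConvexOn ℝ (X ×ˢ U)
      (fun p : EuclideanSpace ℝ (Fin n) × EuclideanSpace ℝ (Fin m) => ℓ p.1 p.2))
    (xe : EuclideanSpace ℝ (Fin n)) (ue : EuclideanSpace ℝ (Fin m))
    (hxe : xe ∈ X) (hue : ue ∈ U) (heq : f xe ue = xe)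
    (p : EuclideanSpace ℝ (Fin n))
    -- `p` is a Lagrange multiplier: `(xᵉ,uᵉ)` minimizes `ℓ(x,u) + pᵀ(x − f(x,u))` on `X × U`
    (hlagrange : ∀ x ∈ X, ∀ u ∈ U,
      ℓ xe ue + ⟪p, xe - f xe ue⟫ ≤ ℓ x u + ⟪p, x - f x u⟫) :
    ∃ α : ℝ → ℝ, KInf α ∧ ∀ x ∈ X, ∀ u ∈ U,
      ⟪p, f x u⟫ ≤ ⟪p, x⟫ + ℓ x u - ℓ xe ue - α ‖x - xe‖ := by
  set K := X ×ˢ U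
  have hze : (xe, ue) ∈ K := ⟨hxe, hue⟩
  set φ : EuclideanSpace ℝ (Fin n) × EuclideanSpace ℝ (Fin m) → ℝ :=
    fun z => ℓ z.1 z.2 + ⟪p, z.1 - A z⟫
  have hmin : IsMinOn φ K (xe, ue) := fun z hz => by
    simpa [φ, hf] using hlagrange z.1 hz.1 z.2 hz.2
  have hmultiplier : ConvexOn ℝ K fun z => ⟪p, z.1 - A z⟫ :=
    ((innerₛₗ ℝ p).toAffineMap.comp
      ((LinearMap.fst ℝ (EuclideanSpace ℝ (Fin n)) (EuclideanSpace ℝ (Fin m))).toAffineMap -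
        A)).convexOn hℓconv.1
  have hφconv : StrictConvexOn ℝ K φ := hℓconv.add_convexOn hmultiplier
  have hφcont : ContinuousOn φ K :=
    hℓcont.add (by have := A.continuous_of_finiteDimensional; fun_prop)
  obtain ⟨α, hα, hαle⟩ := exists_kInf_le_of_isCompact (L := fun z => φ z - φ (xe, ue))
    (g := fun z => ‖z.1 - xe‖) hcomp (hφcont.sub continuousOn_const) (by fun_prop)
    (fun z hz => sub_nonneg.2 (hmin hz)) fun z hz hgz => sub_pos.2 <|
      hφconv.lt_of_isMinOn hmin hze hz (by rintro rfl; simp at hgz)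
  refine ⟨α, hα, fun x hx u hu => ?_⟩
  have := hαle (x, u) ⟨hx, hu⟩
  simp only [φ, ← hf, heq, sub_self, add_zero, inner_sub_right] at this
  linarith

/-- Strict dissipativity with linear storage function for affine dynamics and strictly convex
cost: if `X × U` is compact and convex, `f` is affine, `ℓ` is continuous and strictly convex
on `X × U`, and `p` is a Lagrange multiplier of the optimal equilibrium problem, then the
problem is strictly dissipative with the linear storage function `λ(x) = pᵀx`. -/
theorem strict_dissipativity_linear_storage_convex {n m : ℕ}
    (X : Set (EuclideanSpace ℝ (Fin n))) (U : Set (EuclideanSpace ℝ (Fin m)))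
    (hcomp : IsCompact (X ×ˢ U)) (hconv : Convex ℝ (X ×ˢ U))
    (f : EuclideanSpace ℝ (Fin n) → EuclideanSpace ℝ (Fin m) → EuclideanSpace ℝ (Fin n))
    (A : (EuclideanSpace ℝ (Fin n) × EuclideanSpace ℝ (Fin m)) →ᵃ[ℝ] EuclideanSpace ℝ (Fin n))
    (hf : ∀ x u, f x u = A (x, u))
    (ℓ : EuclideanSpace ℝ (Fin n) → EuclideanSpace ℝ (Fin m) → ℝ)
    (hℓcont : ContinuousOn (fun p : EuclideanSpace ℝ (Fin n) × EuclideanSpace ℝ (Fin m) =>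
      ℓ p.1 p.2) (X ×ˢ U))
    (hℓconv : StrictConvexOn ℝ (X ×ˢ U)
      (fun p : EuclideanSpace ℝ (Fin n) × EuclideanSpace ℝ (Fin m) => ℓ p.1 p.2))
    (xe : EuclideanSpace ℝ (Fin n)) (ue : EuclideanSpace ℝ (Fin m))
    (hxe : xe ∈ X) (hue : ue ∈ U) (heq : f xe ue = xe)
    (p : EuclideanSpace ℝ (Fin n))
    -- `p` is a Lagrange multiplier: `(xᵉ,uᵉ)` minimizes `ℓ(x,u) + pᵀ(x − f(x,u))` on `X × U`
    (hlagrange : ∀ x ∈ X, ∀ u ∈ U,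
      ℓ xe ue + ⟪p, xe - f xe ue⟫ ≤ ℓ x u + ⟪p, x - f x u⟫) :
    ∃ α : ℝ → ℝ, KInf α ∧ ∀ x ∈ X, ∀ u ∈ U,
      ⟪p, f x u⟫ ≤ ⟪p, x⟫ + ℓ x u - ℓ xe ue - α ‖x - xe‖ :=
  strict_dissipativity_linear_storage_convex_general X U hcomp f A hf ℓ hℓcont hℓconv xe ue hxe hue
    heq p hlagrange
end

section
/- (Strict dissipativity implies nonlinear detectability.) Assume ℓ(x,u) ≥ 0 for all x ∈ X, u ∈ U and ℓ(x^e,u^e) = 0, and assume the discrete-time problem is strictly dissipative in one-step form with storage function λ : X → ℝ and α ∈ K∞, i.e., λ(f(x,u)) ≤ λ(x) + ℓ(x,u) − α(‖x−x^e‖) for all x ∈ X, u ∈ U with f(x,u) ∈ X. Assume moreover that λ(x^e) ≤ λ(x) for all x ∈ X and that there exists α₁ ∈ K∞ with λ(x) − λ(x^e) ≤ α₁(‖x−x^e‖) for all x ∈ X. Then W(x) := λ(x) − λ(x^e) satisfies the detectability conditions: W(x) ≥ 0, W(x) ≤ α₁(‖x−x^e‖), and W(f(x,u)) − W(x) ≤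 −α(‖x−x^e‖) + α₃(ℓ(x,u)) for all x ∈ X, u ∈ U with f(x,u) ∈ X, where α₃ is the identity function (which belongs to K∞). -/
theorem kInf_id : KInf fun r => r := by
  refine ⟨continuousOn_id, strictMonoOn_id, rfl, fun _ hr => hr, fun M => ?_⟩
  exact ⟨max M 0 + 1, Set.mem_Ici.2 (by positivity), (le_max_left M 0).trans_lt (lt_add_one _)⟩

theorem strict_dissipativity_implies_detectability_general {n m : ℕ}
    (f : EuclideanSpace ℝ (Fin n) → EuclideanSpace ℝ (Fin m) → EuclideanSpace ℝ (Fin n))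
    (X : Set (EuclideanSpace ℝ (Fin n))) (U : Set (EuclideanSpace ℝ (Fin m)))
    (ℓ : EuclideanSpace ℝ (Fin n) → EuclideanSpace ℝ (Fin m) → ℝ)
    (xe : EuclideanSpace ℝ (Fin n))
    (lam : EuclideanSpace ℝ (Fin n) → ℝ) (α : ℝ → ℝ)
    (hdiss : ∀ x ∈ X, ∀ u ∈ U, f x u ∈ X →
      lam (f x u) ≤ lam x + ℓ x u - α ‖x - xe‖)
    (hmin : ∀ x ∈ X, lam xe ≤ lam x)
    (α₁ : ℝ → ℝ)
    (hupper : ∀ x ∈ X, lam x - lam xe ≤ α₁ ‖x - xe‖)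
    (W : EuclideanSpace ℝ (Fin n) → ℝ) (hW : ∀ x, W x = lam x - lam xe)
    (α₃ : ℝ → ℝ) (hα₃ : α₃ = fun r => r) :
    KInf α₃ ∧
    (∀ x ∈ X, 0 ≤ W x) ∧
    (∀ x ∈ X, W x ≤ α₁ ‖x - xe‖) ∧
    (∀ x ∈ X, ∀ u ∈ U, f x u ∈ X →
      W (f x u) - W x ≤ -α ‖x - xe‖ + α₃ (ℓ x u)) := by
  subst hα₃
  refine ⟨kInf_id, fun x hx => ?_, fun x hx => ?_, fun x hx u hu hfx => ?_⟩
  · simpa [hW] using hmin x hx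
  · simpa [hW] using hupper x hx
  · simp only [hW]
    linarith [hdiss x hx u hu hfx]

/-- Strict dissipativity implies the nonlinear detectability condition of Grimm et al.:
`W(x) = λ(x) − λ(xᵉ)` is nonnegative, bounded by `α₁(‖x−xᵉ‖)`, and satisfies
`W(f(x,u)) − W(x) ≤ −α(‖x−xᵉ‖) + α₃(ℓ(x,u))` with `α₃ = id ∈ K∞`. -/
theorem strict_dissipativity_implies_detectability {n m : ℕ}
    (f : EuclideanSpace ℝ (Fin n) → EuclideanSpace ℝ (Fin m) → EuclideanSpace ℝ (Fin n))
    (X : Set (EuclideanSpace ℝ (Fin n))) (U : Set (EuclideanSpace ℝ (Fin m)))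
    (ℓ : EuclideanSpace ℝ (Fin n) → EuclideanSpace ℝ (Fin m) → ℝ)
    (xe : EuclideanSpace ℝ (Fin n)) (ue : EuclideanSpace ℝ (Fin m))
    (hxe : xe ∈ X) (hue : ue ∈ U) (heq : f xe ue = xe)
    (hℓpos : ∀ x ∈ X, ∀ u ∈ U, 0 ≤ ℓ x u) (hℓe : ℓ xe ue = 0)
    (lam : EuclideanSpace ℝ (Fin n) → ℝ) (α : ℝ → ℝ) (hα : KInf α)
    (hdiss : ∀ x ∈ X, ∀ u ∈ U, f x u ∈ X →
      lam (f x u) ≤ lam x + ℓ x u - α ‖x - xe‖)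
    (hmin : ∀ x ∈ X, lam xe ≤ lam x)
    (α₁ : ℝ → ℝ) (hα₁ : KInf α₁)
    (hupper : ∀ x ∈ X, lam x - lam xe ≤ α₁ ‖x - xe‖)
    (W : EuclideanSpace ℝ (Fin n) → ℝ) (hW : ∀ x, W x = lam x - lam xe)
    (α₃ : ℝ → ℝ) (hα₃ : α₃ = fun r => r) :
    KInf α₃ ∧
    (∀ x ∈ X, 0 ≤ W x) ∧
    (∀ x ∈ X, W x ≤ α₁ ‖x - xe‖) ∧
    (∀ x ∈ X, ∀ u ∈ U, f x u ∈ X →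
      W (f x u) - W x ≤ -α ‖x - xe‖ + α₃ (ℓ x u)) :=
  strict_dissipativity_implies_detectability_general f X U ℓ xe lam α hdiss hmin α₁ hupper W hW α₃
    hα₃
end
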